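/- Let $A$ be an abelian variety over an uncountable algebraically closed field and $K \subseteq A$ a subgroup which is a countable union of Zariski closed subsets. Let $A_0$ be the unique irreducible component of the irredundant decomposition of $K$ passing through $0$ (an abelian subvariety). Then there exists a countable subset $\Xi \subseteq K$ such that $K = \bigcup_{x \in \Xi} (x + A_0)$, i.e. $K$ is a countable union of translates of $A_0$. -/

import Mathlib

open MvPolynomial

/-- Projective `n`-space over `k`, modeled as the projectivization of `k^(n+1)`. -/
abbrev ProjSpace (k : Type) [Field k] (n : ℕ) : Type :=
  Projectivization k (Fin (n + 1) → k)

/-- Zariski closed subsets of projective space: common zero loci of sets of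
homogeneous polynomials. -/
def ProjClosed (k : Type) [Field k] {n : ℕ} (C : Set (ProjSpace k n)) : Prop :=
  ∃ S : Set (MvPolynomial (Fin (n + 1)) k),
    (∀ f ∈ S, ∃ d, MvPolynomial.IsHomogeneous f d) ∧
    C = {x | ∀ f ∈ S, ∀ (v : Fin (n + 1) → k) (hv : v ≠ 0),
          Projectivization.mk k v hv = x → MvPolynomial.eval v f = 0}

variable {α : Type*}

/-- `W` is a Zariski closed subset of the variety `V`, where `zc` is the
ambient Zariski-closedness predicate. -/
def ClosedIn (zc : Set α → Prop) (V W : Set α) : Prop :=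
  W ⊆ V ∧ ∃ C, zc C ∧ W = V ∩ C

/-- `U` is a Zariski open subset of `V`. -/
def OpenIn (zc : Set α → Prop) (V U : Set α) : Prop :=
  ∃ W, ClosedIn zc V W ∧ U = V \ W

/-- `S ⊆ V` is irreducible. -/
def IrredIn (zc : Set α → Prop) (V S : Set α) : Prop :=
  S.Nonempty ∧ ∀ W₁ W₂, ClosedIn zc V W₁ → ClosedIn zc V W₂ →
    S ⊆ W₁ ∪ W₂ → S ⊆ W₁ ∨ S ⊆ W₂

/-- `W` is an irreducible Zariski closed subset of `V`. -/
def IrredClosedIn (zc : Set α → Prop) (V W : Set α) : Prop :=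
  ClosedIn zc V W ∧ IrredIn zc V W

/-- `W ⊆ V` is c-closed: a countable union of irreducible Zariski closed subsets. -/
def CClosedIn (zc : Set α → Prop) (V W : Set α) : Prop :=
  ∃ 𝒞 : Set (Set α), 𝒞.Countable ∧ (∀ C ∈ 𝒞, IrredClosedIn zc V C) ∧ W = ⋃₀ 𝒞

/-- `U ⊆ V` is c-open: the complement in `V` of a c-closed subset. -/
def COpenIn (zc : Set α → Prop) (V U : Set α) : Prop :=
  ∃ W, CClosedIn zc V W ∧ U = V \ W

/-- A quasi-projective variety: an irreducible Zariski locally closed subset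
of projective space. -/
def IsQuasiProjectiveVariety (k : Type) [Field k] {n : ℕ} (V : Set (ProjSpace k n)) : Prop :=
  (∃ C₁ C₂, ProjClosed k C₁ ∧ ProjClosed k C₂ ∧ V = C₁ \ C₂) ∧
    IrredIn (ProjClosed k) Set.univ V

/-- A model of an abelian variety over `k`: a projective irreducible group
variety, together with the regularity/completeness properties of its group
operations used in this paper. -/
structure AbelianVariety (k : Type) [Field k] (n : ℕ) where
  carrier : Set (ProjSpace k n)
  carrier_closed : ProjClosed k carrier
  carrier_irred : IrredIn (ProjClosed k) Set.univ carrier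
  zero : ProjSpace k n
  zero_mem : zero ∈ carrier
  add : ProjSpace k n → ProjSpace k n → ProjSpace k n
  neg : ProjSpace k n → ProjSpace k n
  add_mem : ∀ {x y}, x ∈ carrier → y ∈ carrier → add x y ∈ carrier
  neg_mem : ∀ {x}, x ∈ carrier → neg x ∈ carrier
  add_comm : ∀ x ∈ carrier, ∀ y ∈ carrier, add x y = add y x
  add_assoc : ∀ x ∈ carrier, ∀ y ∈ carrier, ∀ z ∈ carrier,
    add (add x y) z = add x (add y z)
  zero_add : ∀ x ∈ carrier, add zero x = x
  neg_add_cancel : ∀ x ∈ carrier, add (neg x) x = zero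
  /-- points are Zariski closed (and trivially irreducible) -/
  singleton_closed : ∀ x ∈ carrier, IrredClosedIn (ProjClosed k) carrier {x}
  /-- regularity and completeness: the image of a product of irreducible
  Zariski closed subsets under addition is irreducible Zariski closed -/
  image2_add_closed : ∀ W₁ W₂, IrredClosedIn (ProjClosed k) carrier W₁ →
    IrredClosedIn (ProjClosed k) carrier W₂ →
    IrredClosedIn (ProjClosed k) carrier (Set.image2 add W₁ W₂)
  /-- regularity of the inverse: the image of an irreducible Zariski closed
  subset under negation is irreducible Zariski closed -/
  image_neg_closed : ∀ W, IrredClosedIn (ProjClosed k) carrier W →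
    IrredClosedIn (ProjClosed k) carrier (neg '' W)

namespace AbelianVariety

variable {k : Type} [Field k] {n : ℕ} (A : AbelianVariety k n)

/-- Zariski closed subsets of the abelian variety `A`. -/
def ZClosed (W : Set (ProjSpace k n)) : Prop :=
  ClosedIn (ProjClosed k) A.carrier W

/-- Irreducible Zariski closed subsets of `A`. -/
def ZClosedIrred (W : Set (ProjSpace k n)) : Prop :=
  IrredClosedIn (ProjClosed k) A.carrier W

/-- `K` is a subgroup of the group of closed points of `A`. -/
def IsSubgroupSet (K : Set (ProjSpace k n)) : Prop :=
  K ⊆ A.carrier ∧ A.zero ∈ K ∧ (∀ x ∈ K, ∀ y ∈ K, A.add x y ∈ K) ∧ ∀ x ∈ K, A.neg x ∈ K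

/-- `K` is a countable union of Zariski closed subsets of `A`. -/
def IsCClosed (K : Set (ProjSpace k n)) : Prop :=
  ∃ 𝒞 : Set (Set (ProjSpace k n)), 𝒞.Countable ∧ (∀ C ∈ 𝒞, A.ZClosed C) ∧ K = ⋃₀ 𝒞

/-- `𝒞` is an irredundant decomposition of `K`: a countable collection of
irreducible Zariski closed subsets, none contained in another, with union `K`. -/
def IsIrredundantDecomp (K : Set (ProjSpace k n)) (𝒞 : Set (Set (ProjSpace k n))) : Prop :=
  𝒞.Countable ∧ (∀ C ∈ 𝒞, A.ZClosedIrred C) ∧ K = ⋃₀ 𝒞 ∧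
    ∀ C ∈ 𝒞, ∀ D ∈ 𝒞, C ⊆ D → C = D

/-- An abelian subvariety: an irreducible Zariski closed subgroup. -/
def IsAbelianSubvariety (B : Set (ProjSpace k n)) : Prop :=
  A.ZClosedIrred B ∧ A.IsSubgroupSet B

/-- The translate `x + W` of a subset `W` of `A`. -/
def translate (x : ProjSpace k n) (W : Set (ProjSpace k n)) : Set (ProjSpace k n) :=
  A.add x '' W

end AbelianVariety

/-! For `C ∈ 𝒞` and `x ∈ C`, the set `A₀ + (C - x)` is an irreducible closed subset of `K`
containing both `A₀` and `C - x`. Over an uncountable algebraically closed field an irreducible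
closed set covered by countably many closed sets lies in one of them, so `A₀ + (C - x)` lies in
some member of `𝒞`, which by irredundancy is `A₀`. Hence `C ⊆ x + A₀`, and one point from each of
the countably many `C ∈ 𝒞` gives `Ξ`.

The covering property is a countable Nullstellensatz. Localize the polynomial ring at the monoid
generated by one homogeneous equation of each member of the cover that does not vanish on the
irreducible set `W`, together with a coordinate not vanishing on `W` (so that the point found is
nonzero). Irreducibility of `W` keeps this monoid away from the ideal of `W`; the residue field at a
maximal ideal has countable dimension over `k`, hence equals `k`, and the resulting `k`-point lies
on `W` but on no member of the cover. -/

open Cardinal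

theorem Submonoid.countable_closure {M : Type*} [Monoid M] {s : Set M} (hs : s.Countable) :
    (Submonoid.closure s : Set M).Countable := by
  have : Countable s := hs.to_subtype
  have : Countable (FreeMonoid s) := inferInstanceAs (Countable (List s))
  rw [Submonoid.closure_eq_mrange, MonoidHom.coe_mrange]
  exact Set.countable_range _

theorem rank_localization_le_aleph0 {k R : Type*} [Field k] [CommRing R] [Algebra k R]
    (M : Submonoid R) [Countable M] (hR : Module.rank k R ≤ ℵ₀) :
    Module.rank k (Localization M) ≤ ℵ₀ := by
  let φ : (M →₀ R) →ₗ[k] Localization M := (Finsupp.linearCombination R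
    fun s : M => IsLocalization.mk' (Localization M) (1 : R) s).restrictScalars k
  have hφ : Function.Surjective φ := by
    intro z
    obtain ⟨⟨r, s⟩, rfl⟩ := IsLocalization.mk'_surjective M z
    refine ⟨Finsupp.single s r, ?_⟩
    simp [φ, Algebra.smul_def, ← IsLocalization.mk'_eq_mul_mk'_one]
  calc Module.rank k (Localization M) ≤ Module.rank k (M →₀ R) :=
        LinearMap.rank_le_of_surjective φ hφ
    _ = #M * Module.rank k R := by simp [rank_finsupp]
    _ ≤ ℵ₀ * ℵ₀ := mul_le_mul' mk_le_aleph0 hR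
    _ = ℵ₀ := aleph0_mul_aleph0

theorem algebraMap_bijective_of_rank_le_aleph0 {k L : Type*} [Field k] [IsAlgClosed k]
    [Uncountable k] [Field L] [Algebra k L] (hL : Module.rank k L ≤ ℵ₀) :
    Function.Bijective (algebraMap k L) := by
  have : Algebra.IsAlgebraic k L := ⟨fun x => by
    by_contra hx
    change Transcendental k x at hx
    have hk := hx.linearIndependent_sub_inv.cardinal_lift_le_rank.trans (lift_le_aleph0.2 hL)
    exact hk.not_gt (aleph0_lt_lift.2 aleph0_lt_mk)⟩
  exact IsAlgClosed.algebraMap_bijective_of_isIntegral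

theorem exists_algHom_vanishing_of_disjoint {k R : Type*} [Field k] [IsAlgClosed k]
    [Uncountable k] [CommRing R] [Algebra k R] (hR : Module.rank k R ≤ ℵ₀) {I : Ideal R}
    {M : Submonoid R} (hM : (M : Set R).Countable) (hMI : Disjoint (M : Set R) I) :
    ∃ ψ : R →ₐ[k] k, (∀ q ∈ I, ψ q = 0) ∧ ∀ m ∈ M, ψ m ≠ 0 := by
  have : Countable M := hM.to_subtype
  obtain ⟨𝔪, h𝔪, hI𝔪⟩ := Ideal.exists_le_maximal _
    ((IsLocalization.map_algebraMap_ne_top_iff_disjoint M (Localization M) I).2 hMI)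
  let L := Localization M ⧸ 𝔪
  let _ : Field L := Ideal.Quotient.field 𝔪
  have hL : Module.rank k L ≤ ℵ₀ :=
    (LinearMap.rank_le_of_surjective (Ideal.Quotient.mkₐ k 𝔪).toLinearMap
      Ideal.Quotient.mk_surjective).trans (rank_localization_le_aleph0 M hR)
  let e : k ≃ₐ[k] L := AlgEquiv.ofBijective (Algebra.ofId k L)
    (algebraMap_bijective_of_rank_le_aleph0 hL)
  let π : R →ₐ[k] L := (Ideal.Quotient.mkₐ k 𝔪).comp (IsScalarTower.toAlgHom k R _)
  refine ⟨e.symm.toAlgHom.comp π, fun q hq => ?_, fun m hm => ?_⟩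
  · have : π q = 0 := Ideal.Quotient.eq_zero_iff_mem.2 (hI𝔪 (Ideal.mem_map_of_mem _ hq))
    simp [this]
  · have hu : IsUnit (π m) :=
      (IsLocalization.map_units (Localization M) ⟨m, hm⟩).map (Ideal.Quotient.mkₐ k 𝔪)
    simpa using hu.ne_zero

theorem MvPolynomial.exists_eval_vanishing_of_disjoint {k σ : Type*} [Field k] [IsAlgClosed k]
    [Uncountable k] [Countable σ] {I : Ideal (MvPolynomial σ k)}
    {M : Submonoid (MvPolynomial σ k)} (hM : (M : Set (MvPolynomial σ k)).Countable)
    (hMI : Disjoint (M : Set (MvPolynomial σ k)) I) :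
    ∃ c : σ → k, (∀ q ∈ I, eval c q = 0) ∧ ∀ m ∈ M, eval c m ≠ 0 := by
  have hR : Module.rank k (MvPolynomial σ k) ≤ ℵ₀ := by
    rw [MvPolynomial.rank_eq_lift, lift_le_aleph0]
    exact mk_le_aleph0
  obtain ⟨ψ, hI, hM⟩ := exists_algHom_vanishing_of_disjoint hR hM hMI
  refine ⟨ψ ∘ X, fun q hq => ?_, fun m hm => ?_⟩
  all_goals rw [← coe_aeval_eq_eval, ← aeval_unique]
  exacts [hI q hq, hM m hm]

theorem MvPolynomial.IsHomogeneous.eval_smul {σ R : Type*} [CommSemiring R]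
    {f : MvPolynomial σ R} {d : ℕ} (hf : f.IsHomogeneous d) (a : R) (v : σ → R) :
    eval (a • v) f = a ^ d * eval v f := by
  rw [eval_eq, eval_eq, Finset.mul_sum]
  refine Finset.sum_congr rfl fun m hm => ?_
  have hdeg : ∑ i ∈ m.support, m i = d := by
    simpa [Finsupp.weight, Finsupp.linearCombination_apply, Finsupp.sum, mul_comm]
      using hf (mem_support_iff.1 hm)
  simp only [Pi.smul_apply, smul_eq_mul, mul_pow, Finset.prod_mul_distrib,
    Finset.prod_pow_eq_pow_sum, hdeg]
  ring

section ProjectiveZeroLoci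

variable {k : Type} [Field k] {n : ℕ}

-- `ProjClosed k C` says exactly that `C = projZeroLocus S` for a set `S` of homogeneous polynomials.
def projZeroLocus (S : Set (MvPolynomial (Fin (n + 1)) k)) : Set (ProjSpace k n) :=
  {x | ∀ f ∈ S, ∀ (v : Fin (n + 1) → k) (hv : v ≠ 0),
    Projectivization.mk k v hv = x → eval v f = 0}

def projVanishingIdeal (W : Set (ProjSpace k n)) : Ideal (MvPolynomial (Fin (n + 1)) k) where
  carrier := {f | ∀ (v : Fin (n + 1) → k) (hv : v ≠ 0), Projectivization.mk k v hv ∈ W →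
    eval v f = 0}
  add_mem' ha hb v hv hx := by rw [map_add, ha v hv hx, hb v hv hx, add_zero]
  zero_mem' _ _ _ := map_zero _
  smul_mem' c _ hq v hv hx := by rw [smul_eq_mul, map_mul, hq v hv hx, mul_zero]

theorem eval_rep_eq_zero_of_mem_projVanishingIdeal {W : Set (ProjSpace k n)}
    {f : MvPolynomial (Fin (n + 1)) k} (hf : f ∈ projVanishingIdeal W) {x : ProjSpace k n}
    (hx : x ∈ W) : eval x.rep f = 0 :=
  hf _ x.rep_nonzero (by rwa [x.mk_rep])

theorem projVanishingIdeal_anti {W W' : Set (ProjSpace k n)} (h : W ⊆ W') :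
    projVanishingIdeal W' ≤ projVanishingIdeal W :=
  fun _ hf v hv hx => hf v hv (h hx)

theorem subset_projZeroLocus_iff {W : Set (ProjSpace k n)}
    {S : Set (MvPolynomial (Fin (n + 1)) k)} :
    W ⊆ projZeroLocus S ↔ S ⊆ projVanishingIdeal W :=
  ⟨fun h _ hf v hv hx => h hx _ hf v hv rfl, fun h _ hx _ hf v hv hv' => h hf v hv (hv' ▸ hx)⟩

theorem mk_mem_projZeroLocus {S : Set (MvPolynomial (Fin (n + 1)) k)}
    (hS : ∀ f ∈ S, ∃ d, f.IsHomogeneous d) {c : Fin (n + 1) → k} (hc : c ≠ 0)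
    (hcS : ∀ f ∈ S, eval c f = 0) : Projectivization.mk k c hc ∈ projZeroLocus S := by
  intro f hf v hv hvc
  obtain ⟨d, hd⟩ := hS f hf
  obtain ⟨a, rfl⟩ := (Projectivization.mk_eq_mk_iff k v c hv hc).1 hvc
  rw [Units.smul_def, hd.eval_smul, hcS f hf, mul_zero]

theorem mem_projZeroLocus_singleton_iff {f : MvPolynomial (Fin (n + 1)) k} {d : ℕ}
    (hf : f.IsHomogeneous d) {x : ProjSpace k n} :
    x ∈ projZeroLocus {f} ↔ eval x.rep f = 0 := by
  refine ⟨fun hx => hx f rfl _ x.rep_nonzero x.mk_rep, fun hx => ?_⟩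
  rw [← x.mk_rep]
  exact mk_mem_projZeroLocus (by simpa using ⟨d, hf⟩) _ (by simpa using hx)

theorem projClosed_projZeroLocus_singleton {f : MvPolynomial (Fin (n + 1)) k} {d : ℕ}
    (hf : f.IsHomogeneous d) : ProjClosed k (projZeroLocus {f}) :=
  ⟨{f}, by simpa using ⟨d, hf⟩, rfl⟩

theorem mk_mem_of_forall_mem_projVanishingIdeal {W Z : Set (ProjSpace k n)}
    (hZ : ProjClosed k Z) (hWZ : W ⊆ Z) {c : Fin (n + 1) → k} (hc : c ≠ 0)
    (hcW : ∀ q ∈ projVanishingIdeal W, eval c q = 0) : Projectivization.mk k c hc ∈ Z := by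
  obtain ⟨S, hS, rfl⟩ := hZ
  exact mk_mem_projZeroLocus hS hc fun f hf => hcW f (subset_projZeroLocus_iff.1 hWZ hf)

theorem IrredIn.mem_or_mem_of_mul_mem_projVanishingIdeal {V W : Set (ProjSpace k n)}
    (hW : IrredIn (ProjClosed k) V W) (hWV : W ⊆ V) {f g : MvPolynomial (Fin (n + 1)) k}
    {df dg : ℕ} (hf : f.IsHomogeneous df) (hg : g.IsHomogeneous dg)
    (hfg : f * g ∈ projVanishingIdeal W) :
    f ∈ projVanishingIdeal W ∨ g ∈ projVanishingIdeal W := by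
  have closedIn {q : MvPolynomial (Fin (n + 1)) k} {d : ℕ} (hq : q.IsHomogeneous d) :
      ClosedIn (ProjClosed k) V (V ∩ projZeroLocus {q}) :=
    ⟨Set.inter_subset_left, _, projClosed_projZeroLocus_singleton hq, rfl⟩
  have cover : W ⊆ (V ∩ projZeroLocus {f}) ∪ (V ∩ projZeroLocus {g}) := by
    intro x hx
    have hx0 : eval x.rep (f * g) = 0 := eval_rep_eq_zero_of_mem_projVanishingIdeal hfg hx
    rw [map_mul, mul_eq_zero, ← mem_projZeroLocus_singleton_iff hf,
      ← mem_projZeroLocus_singleton_iff hg] at hx0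
    exact hx0.imp (⟨hWV hx, ·⟩) (⟨hWV hx, ·⟩)
  refine (hW.2 _ _ (closedIn hf) (closedIn hg) cover).imp ?_ ?_ <;>
    exact fun h => Set.singleton_subset_iff.1
      (subset_projZeroLocus_iff.1 (h.trans Set.inter_subset_right))

theorem IrredIn.disjoint_closure_projVanishingIdeal {V W : Set (ProjSpace k n)}
    (hW : IrredIn (ProjClosed k) V W) (hWV : W ⊆ V) {s : Set (MvPolynomial (Fin (n + 1)) k)}
    (hs : ∀ f ∈ s, (∃ d, f.IsHomogeneous d) ∧ f ∉ projVanishingIdeal W) :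
    Disjoint (Submonoid.closure s : Set (MvPolynomial (Fin (n + 1)) k)) (projVanishingIdeal W) := by
  suffices ∀ m ∈ Submonoid.closure s, (∃ d, m.IsHomogeneous d) ∧ m ∉ projVanishingIdeal W from
    Set.disjoint_left.2 fun m hm => (this m hm).2
  intro m hm
  induction hm using Submonoid.closure_induction with
  | mem f hf => exact hs f hf
  | one =>
    obtain ⟨x, hx⟩ := hW.1
    exact ⟨⟨0, isHomogeneous_one _ _⟩, fun h => one_ne_zero (α := k)
      (by simpa using eval_rep_eq_zero_of_mem_projVanishingIdeal h hx)⟩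
  | mul f g _ _ hf hg =>
    obtain ⟨⟨df, hdf⟩, hfW⟩ := hf
    obtain ⟨⟨dg, hdg⟩, hgW⟩ := hg
    exact ⟨⟨df + dg, hdf.mul hdg⟩, fun h =>
      (hW.mem_or_mem_of_mul_mem_projVanishingIdeal hWV hdf hdg h).elim hfW hgW⟩

theorem ClosedIn.exists_homogeneous_mem_projVanishingIdeal {V W C : Set (ProjSpace k n)}
    (hC : ClosedIn (ProjClosed k) V C) (hWV : W ⊆ V) (hWC : ¬ W ⊆ C) :
    ∃ f, (∃ d, f.IsHomogeneous d) ∧ f ∈ projVanishingIdeal C ∧ f ∉ projVanishingIdeal W := by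
  obtain ⟨-, Z, ⟨S, hS, rfl⟩, rfl⟩ := hC
  have hWZ : ¬ S ⊆ projVanishingIdeal W := fun h =>
    hWC (Set.subset_inter hWV (subset_projZeroLocus_iff.2 h))
  obtain ⟨f, hfS, hfW⟩ := Set.not_subset.1 hWZ
  exact ⟨f, hS f hfS, projVanishingIdeal_anti Set.inter_subset_right
    (subset_projZeroLocus_iff.1 le_rfl hfS), hfW⟩

theorem IrredClosedIn.exists_subset_of_subset_sUnion [IsAlgClosed k] [Uncountable k]
    {V W : Set (ProjSpace k n)} (hV : ProjClosed k V) (hW : IrredClosedIn (ProjClosed k) V W)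
    {𝒟 : Set (Set (ProjSpace k n))} (h𝒟 : 𝒟.Countable)
    (hcl : ∀ C ∈ 𝒟, ClosedIn (ProjClosed k) V C) (hcov : W ⊆ ⋃₀ 𝒟) : ∃ C ∈ 𝒟, W ⊆ C := by
  by_contra! hno
  obtain ⟨⟨hWV, Z, hZ, hWeq⟩, hWirr⟩ := hW
  choose f hf using fun C : 𝒟 => (hcl C C.2).exists_homogeneous_mem_projVanishingIdeal hWV
    (hno C C.2)
  obtain ⟨w, hw⟩ := hWirr.1
  obtain ⟨j, hj⟩ := Function.ne_iff.1 w.rep_nonzero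
  have hXj : X j ∉ projVanishingIdeal W := fun h => hj (by
    simpa using eval_rep_eq_zero_of_mem_projVanishingIdeal h hw)
  let s := insert (X j) (Set.range f)
  have hs : s.Countable := by
    have : Countable 𝒟 := h𝒟.to_subtype
    exact (Set.countable_range f).insert _
  have hsW : ∀ g ∈ s, (∃ d, g.IsHomogeneous d) ∧ g ∉ projVanishingIdeal W := by
    rintro g (rfl | ⟨C, rfl⟩)
    exacts [⟨⟨1, isHomogeneous_X k j⟩, hXj⟩, ⟨(hf C).1, (hf C).2.2⟩]
  obtain ⟨c, hcW, hcs⟩ := MvPolynomial.exists_eval_vanishing_of_disjoint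
    (Submonoid.countable_closure hs) (hWirr.disjoint_closure_projVanishingIdeal hWV hsW)
  have hc : c ≠ 0 := fun h => hcs (X j) (Submonoid.subset_closure (Set.mem_insert _ _))
    (by simp [h])
  have hcW' : Projectivization.mk k c hc ∈ W := hWeq ▸
    ⟨mk_mem_of_forall_mem_projVanishingIdeal hV hWV hc hcW,
      mk_mem_of_forall_mem_projVanishingIdeal hZ (hWeq ▸ Set.inter_subset_right) hc hcW⟩
  obtain ⟨C, hC, hcC⟩ := hcov hcW'
  exact hcs (f ⟨C, hC⟩) (Submonoid.subset_closure (Set.mem_insert_of_mem _ ⟨_, rfl⟩))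
    ((hf ⟨C, hC⟩).2.1 c hc hcC)

end ProjectiveZeroLoci

namespace AbelianVariety

variable {k : Type} [Field k] {n : ℕ} (A : AbelianVariety k n)

theorem add_zero {x : ProjSpace k n} (hx : x ∈ A.carrier) : A.add x A.zero = x := by
  rw [A.add_comm x hx _ A.zero_mem, A.zero_add x hx]

theorem add_neg_cancel_left {x y : ProjSpace k n} (hx : x ∈ A.carrier) (hy : y ∈ A.carrier) :
    A.add x (A.add (A.neg x) y) = y := by
  rw [← A.add_assoc x hx _ (A.neg_mem hx) y hy, A.add_comm x hx _ (A.neg_mem hx),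
    A.neg_add_cancel x hx, A.zero_add y hy]

variable {A}

theorem ZClosedIrred.translate {W : Set (ProjSpace k n)}
    (hW : A.ZClosedIrred W) {x : ProjSpace k n} (hx : x ∈ A.carrier) :
    A.ZClosedIrred (A.translate x W) := by
  rw [AbelianVariety.translate, ← Set.image2_singleton_left]
  exact A.image2_add_closed _ _ (A.singleton_closed x hx) hW

theorem IsSubgroupSet.image2_add_subset {K W₁ W₂ : Set (ProjSpace k n)} (hK : A.IsSubgroupSet K)
    (h₁ : W₁ ⊆ K) (h₂ : W₂ ⊆ K) : Set.image2 A.add W₁ W₂ ⊆ K :=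
  Set.image2_subset_iff.2 fun _ hx _ hy => hK.2.2.1 _ (h₁ hx) _ (h₂ hy)

theorem IsSubgroupSet.translate_subset {K W : Set (ProjSpace k n)} (hK : A.IsSubgroupSet K)
    {x : ProjSpace k n} (hx : x ∈ K) (hW : W ⊆ K) : A.translate x W ⊆ K := by
  rw [AbelianVariety.translate, ← Set.image2_singleton_left]
  exact hK.image2_add_subset (Set.singleton_subset_iff.2 hx) hW

theorem IsIrredundantDecomp.subset {K : Set (ProjSpace k n)} {𝒞 : Set (Set (ProjSpace k n))}
    (hdec : A.IsIrredundantDecomp K 𝒞) {C : Set (ProjSpace k n)} (hC : C ∈ 𝒞) : C ⊆ K :=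
  hdec.2.2.1 ▸ Set.subset_sUnion_of_mem hC

theorem IsIrredundantDecomp.subset_of_zero_mem [IsAlgClosed k] [Uncountable k]
    {K : Set (ProjSpace k n)} (hK : A.IsSubgroupSet K) {𝒞 : Set (Set (ProjSpace k n))}
    (hdec : A.IsIrredundantDecomp K 𝒞) {A₀ : Set (ProjSpace k n)} (hA₀ : A₀ ∈ 𝒞)
    (h0 : A.zero ∈ A₀) {B : Set (ProjSpace k n)} (hB : A.ZClosedIrred B) (hBK : B ⊆ K)
    (hB0 : A.zero ∈ B) : B ⊆ A₀ := by
  have hA₀K := hdec.subset hA₀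
  obtain ⟨h𝒞, hirred, hK𝒞, hanti⟩ := hdec
  have hA₀irr := hirred A₀ hA₀
  have hsum := A.image2_add_closed _ _ hA₀irr hB
  obtain ⟨E, hE, hsumE⟩ := hsum.exists_subset_of_subset_sUnion A.carrier_closed h𝒞
    (fun C hC => (hirred C hC).1)
    (hK𝒞 ▸ hK.image2_add_subset hA₀K hBK)
  have hA₀sum : A₀ ⊆ Set.image2 A.add A₀ B := fun a ha =>
    ⟨a, ha, A.zero, hB0, A.add_zero (hA₀irr.1.1 ha)⟩
  have hBsum : B ⊆ Set.image2 A.add A₀ B := fun b hb =>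
    ⟨A.zero, h0, b, hb, A.zero_add b (hB.1.1 hb)⟩
  rw [hanti A₀ hA₀ E hE (hA₀sum.trans hsumE)]
  exact hBsum.trans hsumE

theorem IsIrredundantDecomp.subset_translate [IsAlgClosed k] [Uncountable k]
    {K : Set (ProjSpace k n)} (hK : A.IsSubgroupSet K) {𝒞 : Set (Set (ProjSpace k n))}
    (hdec : A.IsIrredundantDecomp K 𝒞) {A₀ : Set (ProjSpace k n)} (hA₀ : A₀ ∈ 𝒞)
    (h0 : A.zero ∈ A₀) {C : Set (ProjSpace k n)} (hC : C ∈ 𝒞) {x : ProjSpace k n}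
    (hx : x ∈ C) : C ⊆ A.translate x A₀ := by
  have hxK := hdec.subset hC hx
  have hxA := hK.1 hxK
  have hshift : A.translate (A.neg x) C ⊆ A₀ :=
    hdec.subset_of_zero_mem hK hA₀ h0 ((hdec.2.1 C hC).translate (A.neg_mem hxA))
      (hK.translate_subset (hK.2.2.2 x hxK) (hdec.subset hC))
      ⟨x, hx, A.neg_add_cancel x hxA⟩
  intro y hy
  exact ⟨_, hshift ⟨y, hy, rfl⟩, A.add_neg_cancel_left hxA (hK.1 (hdec.subset hC hy))⟩

end AbelianVariety

theorem statement5_general (k : Type) [Field k] [IsAlgClosed k] [Uncountable k]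
    {n : ℕ} (A : AbelianVariety k n) (K : Set (ProjSpace k n))
    (hsub : A.IsSubgroupSet K)
    (𝒞 : Set (Set (ProjSpace k n))) (hdec : A.IsIrredundantDecomp K 𝒞)
    (A₀ : Set (ProjSpace k n)) (hA₀ : A₀ ∈ 𝒞) (h0 : A.zero ∈ A₀) :
    ∃ Ξ : Set (ProjSpace k n), Ξ ⊆ K ∧ Ξ.Countable ∧
      K = ⋃ x ∈ Ξ, A.translate x A₀ := by
  have hne (C : 𝒞) : (C : Set (ProjSpace k n)).Nonempty := (hdec.2.1 C C.2).2.1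
  have : Countable 𝒞 := hdec.1.to_subtype
  refine ⟨Set.range fun C : 𝒞 => (hne C).some, ?_, Set.countable_range _, ?_⟩
  · rintro _ ⟨C, rfl⟩
    exact hdec.subset C.2 (hne C).some_mem
  refine subset_antisymm ?_ (Set.iUnion₂_subset ?_)
  · rw [hdec.2.2.1]
    rintro y ⟨C, hC, hy⟩
    exact Set.mem_iUnion₂.2 ⟨_, ⟨⟨C, hC⟩, rfl⟩,
      hdec.subset_translate hsub hA₀ h0 hC (hne ⟨C, hC⟩).some_mem hy⟩
  · rintro _ ⟨C, rfl⟩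
    exact hsub.translate_subset (hdec.subset C.2 (hne C).some_mem) (hdec.subset hA₀)

/-- A c-closed subgroup `K` of an abelian variety over an uncountable
algebraically closed field is a countable union of translates of the component
`A₀` of its irredundant decomposition through `0`. -/
theorem statement5 (k : Type) [Field k] [IsAlgClosed k] [Uncountable k]
    {n : ℕ} (A : AbelianVariety k n) (K : Set (ProjSpace k n))
    (hsub : A.IsSubgroupSet K) (hcc : A.IsCClosed K)
    (𝒞 : Set (Set (ProjSpace k n))) (hdec : A.IsIrredundantDecomp K 𝒞)
    (A₀ : Set (ProjSpace k n)) (hA₀ : A₀ ∈ 𝒞) (h0 : A.zero ∈ A₀) :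
    ∃ Ξ : Set (ProjSpace k n), Ξ ⊆ K ∧ Ξ.Countable ∧
      K = ⋃ x ∈ Ξ, A.translate x A₀ :=
  statement5_general k A K hsub 𝒞 hdec A₀ hA₀ h0
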